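/- Let Δ > 1, λ > 0, and let ω_i ≥ 0 for all i ∈ Λ. Then 0 is an eigenvalue of H^Λ with eigenvector the all-spins-up vacuum Ω_Λ, and σ(H^Λ) ∩ (0, 1 − 1/Δ) = ∅; that is, σ(H^Λ) = {0} ∪ ([1 − 1/Δ, ∞) ∩ σ(H^Λ)). -/

import Mathlib

open scoped BigOperators ENNReal
open MeasureTheory

noncomputable section

namespace XXZ

/-- A (finite) discrete interval: a set of integers closed under betweenness. -/
def IsInterval (A : Finset ℤ) : Prop :=
  ∀ x ∈ A, ∀ y ∈ A, ∀ z : ℤ, x ≤ z → z ≤ y → z ∈ A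

/-- distance between two finite subsets of ℤ (junk value 0 if one is empty). -/
def fdist (A B : Finset ℤ) : ℝ :=
  sInf ((fun p : ℤ × ℤ => |(p.1 : ℝ) - (p.2 : ℝ)|) '' ↑(A ×ˢ B))

/-- `[M]_s^Λ`, the `s`-neighborhood of `M` inside `Λ`. -/
def thick (Λ M : Finset ℤ) (s : ℕ) : Finset ℤ :=
  Λ.filter fun x => ∃ y ∈ M, (x - y).natAbs ≤ s

/-- `[M]_{-s}^Λ = {x ∈ M : dist(x, Λ\M) > s}`. -/
def innerThick (Λ M : Finset ℤ) (s : ℕ) : Finset ℤ :=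
  M.filter fun x => ∀ y ∈ Λ \ M, (s : ℤ) < |x - y|

/-- `∂_s^Λ M = [M]_s^Λ \ [M]_{-s}^Λ`. -/
def bdry (Λ M : Finset ℤ) (s : ℕ) : Finset ℤ := thick Λ M s \ innerThick Λ M s

/-- number of connected components of `A` (as a subset of an interval `Λ ⊆ ℤ`). -/
def numComponents (A : Finset ℤ) : ℕ := (A.filter fun x => x - 1 ∉ A).card

/-- spin configurations over `Λ`; `true` at a site means a particle (spin down). -/
abbrev Cfg (Λ : Finset ℤ) := (↥Λ) → Bool

/-- the Hilbert space `⨂_{i∈Λ} ℂ²`, realized as `ℓ²` of configurations. -/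
abbrev HS (Λ : Finset ℤ) := EuclideanSpace ℂ (Cfg Λ)

abbrev Op (Λ : Finset ℤ) := HS Λ →L[ℂ] HS Λ

abbrev Mat (Λ : Finset ℤ) := Matrix (Cfg Λ) (Cfg Λ) ℂ

variable (Λ : Finset ℤ)

def toOp (M : Mat Λ) : Op Λ := Matrix.toEuclideanCLM (𝕜 := ℂ) M

def toMat (T : Op Λ) : Mat Λ := (Matrix.toEuclideanCLM (𝕜 := ℂ)).symm T

/-- the local number operator `𝒩_i` (the copy of `½(1−σ^z)` at site `i`). -/
def NMat (i : ℤ) : Mat Λ :=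
  Matrix.diagonal fun σ => if h : i ∈ Λ then (if σ ⟨i, h⟩ then 1 else 0) else 0

def NOp (i : ℤ) : Op Λ := toOp Λ (NMat Λ i)

/-- `P_+^S`: orthogonal projection onto states with no particles in `S`. -/
def PplusMat (S : Finset ℤ) : Mat Λ :=
  Matrix.diagonal fun σ => if ∀ i : ↥Λ, (i : ℤ) ∈ S → σ i = false then 1 else 0

def Pplus (S : Finset ℤ) : Op Λ := toOp Λ (PplusMat Λ S)

/-- `P_-^S = 1 - P_+^S`. -/
def Pminus (S : Finset ℤ) : Op Λ := 1 - Pplus Λ S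

/-- the configuration with the values at `i` and `i+1` exchanged. -/
def swapCfg (i : ℤ) (σ : Cfg Λ) : Cfg Λ := fun j =>
  if (j : ℤ) = i then (if h : i + 1 ∈ Λ then σ ⟨i + 1, h⟩ else σ j)
  else if (j : ℤ) = i + 1 then (if h : i ∈ Λ then σ ⟨i, h⟩ else σ j)
  else σ j

/-- the hopping term `σ_i^+σ_{i+1}^- + σ_i^-σ_{i+1}^+`. -/
def hopMat (i : ℤ) : Mat Λ := fun σ τ =>
  if hi : i ∈ Λ then
    if hi1 : i + 1 ∈ Λ then
      (if τ ⟨i, hi⟩ ≠ τ ⟨i + 1, hi1⟩ ∧ σ = swapCfg Λ i τ then 1 else 0)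
    else 0
  else 0

/-- `h_{i,i+1} = -𝒩_i 𝒩_{i+1} - (2Δ)⁻¹ (σ_i^+σ_{i+1}^- + σ_i^-σ_{i+1}^+)`. -/
def hMat (Δ : ℝ) (i : ℤ) : Mat Λ :=
  -(NMat Λ i * NMat Λ (i + 1)) - ((2 * Δ : ℂ))⁻¹ • hopMat Λ i

/-- the XXZ Hamiltonian on a subset `S ⊆ Λ`, acting on `H_Λ`:
`Σ_{{i,i+1}⊆S} h_{i,i+1} + Σ_{i∈S} 𝒩_i + λ Σ_{i∈S} ω_i 𝒩_i`. -/
def HonMat (Δ lam : ℝ) (ω : ℤ → ℝ) (S : Finset ℤ) : Mat Λ :=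
  (∑ i ∈ S.filter (fun i => i + 1 ∈ S), hMat Λ Δ i)
    + (∑ i ∈ S, NMat Λ i)
    + (lam : ℂ) • (∑ i ∈ S, (ω i : ℂ) • NMat Λ i)

/-- the random XXZ Hamiltonian `H^Λ = H_0^Λ + λ Σ_{i∈Λ} ω_i 𝒩_i`. -/
def HOp (Δ lam : ℝ) (ω : ℤ → ℝ) : Op Λ := toOp Λ (HonMat Λ Δ lam ω Λ)

/-- the free Hamiltonian `H_0^Λ`. -/
def H0Op (Δ : ℝ) : Op Λ :=
  toOp Λ ((∑ i ∈ Λ.filter (fun i => i + 1 ∈ Λ), hMat Λ Δ i) + ∑ i ∈ Λ, NMat Λ i)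

/-- the decoupled Hamiltonian `H^{A,A^c} = H^A + H^{A^c}` on `H_Λ`. -/
def HdecOp (Δ lam : ℝ) (ω : ℤ → ℝ) (A : Finset ℤ) : Op Λ :=
  toOp Λ (HonMat Λ Δ lam ω A + HonMat Λ Δ lam ω (Λ \ A))

/-- the number-of-clusters operator `W^Λ = 𝒩^Λ - Σ 𝒩_i 𝒩_{i+1}`. -/
def WOp : Op Λ :=
  toOp Λ ((∑ i ∈ Λ, NMat Λ i)
    - ∑ i ∈ Λ.filter (fun i => i + 1 ∈ Λ), NMat Λ i * NMat Λ (i + 1))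

/-- total number operator `𝒩^Λ`. -/
def NtotOp : Op Λ := toOp Λ (∑ i ∈ Λ, NMat Λ i)

/-- spectral projection `χ_I(T)` (via the continuous functional calculus;
for a self-adjoint `T` the spectrum is finite, so every function is continuous on it). -/
def specProj (T : Op Λ) (I : Set ℝ) : Op Λ :=
  cfc (fun x : ℝ => I.indicator (fun _ => (1 : ℝ)) x) T

/-- `f(T)` for a real-valued (Borel) function `f`. -/
def opFun (T : Op Λ) (f : ℝ → ℝ) : Op Λ := cfc f T

/-- resolvent `(T - z)⁻¹` (junk value `0` when not invertible). -/
def res (T : Op Λ) (z : ℂ) : Op Λ := Ring.inverse (T - z • 1)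

/-- the unitary `e^{itT}`. -/
def uexp (T : Op Λ) (t : ℝ) : Op Λ := NormedSpace.exp ((Complex.I * (t : ℂ)) • T)

/-- Heisenberg evolution `τ_t(T) = e^{itH} T e^{-itH}`. -/
def heis (H : Op Λ) (t : ℝ) (T : Op Λ) : Op Λ := uexp Λ H t * T * uexp Λ H (-t)

/-- the deformed Hamiltonian `Ĥ_k^Λ`. -/
def Hhat (Δ lam : ℝ) (ω : ℤ → ℝ) (k : ℕ) : Op Λ :=
  if k = 0 then HOp Λ Δ lam ω + ((1 - 1 / Δ : ℝ) : ℂ) • specProj Λ (WOp Λ) {0}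
  else HOp Λ Δ lam ω + ((k * (1 - 1 / Δ) : ℝ) : ℂ) •
    (specProj Λ (WOp Λ) (Set.Icc 1 k)
      + (((k + 1 : ℝ) / k : ℝ) : ℂ) • specProj Λ (WOp Λ) {0})

/-- support predicate, on matrices: `M` acts as `M_A ⊗ I_{A^c}`. -/
def MatSupportedOn (M : Mat Λ) (A : Finset ℤ) : Prop :=
  (∀ σ τ : Cfg Λ, M σ τ ≠ 0 → ∀ i : ↥Λ, (i : ℤ) ∉ A → σ i = τ i) ∧
  (∀ σ τ σ' τ' : Cfg Λ,
    (∀ i : ↥Λ, (i : ℤ) ∈ A → (σ i = σ' i ∧ τ i = τ' i)) →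
    (∀ i : ↥Λ, (i : ℤ) ∉ A → (σ i = τ i ∧ σ' i = τ' i)) → M σ τ = M σ' τ')

/-- an observable on `H_Λ` is supported on `A ⊆ Λ` if it has the form `T_A ⊗ I`. -/
def SupportedOn (T : Op Λ) (A : Finset ℤ) : Prop := MatSupportedOn Λ (toMat Λ T) A

/-- the rank-one projection `π_M` onto the canonical basis vector `φ_M`. -/
def piProj (M : Finset ℤ) : Op Λ :=
  toOp Λ (Matrix.diagonal fun σ => if σ = (fun i : ↥Λ => decide ((i : ℤ) ∈ M)) then 1 else 0)

/-- the all-spins-up vacuum vector `Ω_Λ`. -/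
def vac : HS Λ := EuclideanSpace.single (fun _ => false) 1

/-- extension of a field on `Λ` to `ℤ` by zero. -/
def extend (ω : ↥Λ → ℝ) : ℤ → ℝ := fun i => if h : i ∈ Λ then ω ⟨i, h⟩ else 0

/-- expectation with respect to the i.i.d. field `{ω_i}_{i∈Λ}` with single-site measure `μ`. -/
def expec (μ : Measure ℝ) (F : (ℤ → ℝ) → ℝ) : ℝ :=
  ∫ ω : ↥Λ → ℝ, F (extend Λ ω) ∂(Measure.pi fun _ => μ)

/-- Borel functions vanishing outside `J` and bounded by `1`. -/
def B1 (J : Set ℝ) : Set (ℝ → ℝ) :=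
  {f | Measurable f ∧ (∀ x, x ∉ J → f x = 0) ∧ ∀ x, |f x| ≤ 1}

/-- `⟨t⟩ = (1+t²)^{1/2}`. -/
def jap (t : ℝ) : ℝ := Real.sqrt (1 + t ^ 2)

/-- the assumptions on the single-site distribution `μ`: a probability measure,
absolutely continuous with bounded density, with `{0,1} ⊆ supp μ ⊆ [0,1]`. -/
structure SingleSite (μ : Measure ℝ) : Prop where
  prob : IsProbabilityMeasure μ
  ac : μ ≪ volume
  bounded : ∃ C : ℝ≥0∞, C ≠ ⊤ ∧ ∀ᵐ x ∂volume, μ.rnDeriv volume x ≤ C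
  supp_sub : μ (Set.Icc 0 1) = 1
  zero_mem : ∀ ε > 0, 0 < μ (Set.Ioo (-ε) ε)
  one_mem : ∀ ε > 0, 0 < μ (Set.Ioo (1 - ε) (1 + ε))

/-- Condition `L_r`: quasi-locality (localization) on the energy interval
`Ǐ_{≤r} = (-∞, (r+7/8)(1-1/Δ)]`, with constants `ξ_r, θ_r` (and some `F_r`). -/
def ConditionL (μ : Measure ℝ) (Δ₀ lam0 Δ lam r ξ θ : ℝ) : Prop :=
  Δ₀ ≤ Δ ∧ lam0 ≤ lam ∧ 0 < ξ ∧ 0 < θ ∧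
  ∃ F : ℝ, 0 < F ∧
    ∀ Λ : Finset ℤ, Λ.Nonempty → IsInterval Λ →
    ∀ A B : Finset ℤ, A ⊆ B → B ⊆ Λ → IsInterval A →
      (expec Λ μ (fun ω =>
          ⨆ f ∈ B1 (Set.Iic ((r + 7 / 8) * (1 - 1 / Δ))),
            ‖Pminus Λ A * opFun Λ (HOp Λ Δ lam ω) f * Pplus Λ B‖)
        ≤ F * (Λ.card : ℝ) ^ ξ * Real.exp (-θ * fdist A (Λ \ B))) ∧
      ∀ z : ℂ, z.re ≤ (r + 7 / 8) * (1 - 1 / Δ) →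
        expec Λ μ (fun ω =>
            ‖Pminus Λ A * res Λ (HOp Λ Δ lam ω) z * Pplus Λ B‖ ^ ((1 : ℝ) / 4))
          ≤ F * (Λ.card : ℝ) ^ ξ * Real.exp (-θ * fdist A (Λ \ B))

/-- `β_{n/2}`:  `β_0 = 0`,  `β_q = β_{q-1/2} + 9⌈q⌉ + 13`. -/
def betaN : ℕ → ℕ
  | 0 => 0
  | n + 1 => betaN n + 9 * ((n + 2) / 2) + 13

end XXZ

/-!
In the configuration basis, `H^Λ` is the diagonal matrix `W + λ Σ ω_i 𝒩_i`, where `W` counts the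
particle clusters of a configuration, plus the hopping term `-(2Δ)⁻¹ Σ (σ_i^+σ_{i+1}^- + h.c.)`.
The hopping term kills the vacuum and cannot reach it, so an eigenvector with a nonzero eigenvalue
lives on configurations with `W ≥ 1`. By the Schur test the hopping term is bounded, as a quadratic
form, by `(2Δ)⁻¹` times the number of domain walls, which is at most `2W`. Hence on such vectors
the quadratic form of `H^Λ` is at least `(1 - 1/Δ) W ≥ 1 - 1/Δ`, and hermiticity makes the
eigenvalue real.
-/

open Finset

namespace Matrix

variable {n 𝕜 : Type*} [Fintype n] [RCLike 𝕜]

theorem mem_spectrum_iff_exists_mulVec_eq_smul {K : Type*} [Field K] [DecidableEq n]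
    {A : Matrix n n K} {z : K} : z ∈ spectrum K A ↔ ∃ v ≠ 0, A *ᵥ v = z • v := by
  rw [← spectrum_toLin', ← Module.End.hasEigenvalue_iff_mem_spectrum]
  constructor
  · intro hz
    obtain ⟨v, hv⟩ := hz.exists_hasEigenvector
    exact ⟨v, hv.2, by simpa using hv.apply_eq_smul⟩
  · rintro ⟨v, hv, hAv⟩
    exact Module.End.hasEigenvalue_of_hasEigenvector
      ⟨Module.End.mem_eigenspace_iff.2 (by simpa using hAv), hv⟩

theorem star_dotProduct_self_eq (v : n → 𝕜) : star v ⬝ᵥ v = ((∑ i, ‖v i‖ ^ 2 : ℝ) : 𝕜) := by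
  simp [dotProduct, RCLike.conj_mul]

theorem star_dotProduct_diagonal_mulVec (d v : n → 𝕜) [DecidableEq n] :
    star v ⬝ᵥ diagonal d *ᵥ v = ∑ i, d i * (‖v i‖ ^ 2 : ℝ) := by
  simp only [dotProduct, mulVec_diagonal, Pi.star_apply, RCLike.star_def]
  refine sum_congr rfl fun i _ => ?_
  push_cast
  rw [← RCLike.conj_mul]
  ring

theorem norm_star_dotProduct_mulVec_le (A : Matrix n n 𝕜) (v : n → 𝕜) {r : n → ℝ}
    (hrow : ∀ i, ∑ j, ‖A i j‖ ≤ r i) (hcol : ∀ j, ∑ i, ‖A i j‖ ≤ r j) :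
    ‖star v ⬝ᵥ A *ᵥ v‖ ≤ ∑ i, r i * ‖v i‖ ^ 2 := by
  have hamgm : ∀ i j, ‖v i‖ * ‖v j‖ ≤ (‖v i‖ ^ 2 + ‖v j‖ ^ 2) / 2 := fun i j => by
    nlinarith [sq_nonneg (‖v i‖ - ‖v j‖)]
  calc ‖star v ⬝ᵥ A *ᵥ v‖ = ‖∑ i, ∑ j, star (v i) * (A i j * v j)‖ := by
        simp only [dotProduct, mulVec, Pi.star_apply, mul_sum]
    _ ≤ ∑ i, ∑ j, ‖A i j‖ * (‖v i‖ * ‖v j‖) := by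
        refine (norm_sum_le _ _).trans (sum_le_sum fun i _ => (norm_sum_le _ _).trans ?_)
        exact sum_le_sum fun j _ => le_of_eq (by rw [norm_mul, norm_mul, norm_star]; ring)
    _ ≤ ∑ i, ∑ j, ‖A i j‖ * ((‖v i‖ ^ 2 + ‖v j‖ ^ 2) / 2) :=
        sum_le_sum fun i _ => sum_le_sum fun j _ =>
          mul_le_mul_of_nonneg_left (hamgm i j) (norm_nonneg _)
    _ = ((∑ i, (∑ j, ‖A i j‖) * ‖v i‖ ^ 2) + ∑ j, (∑ i, ‖A i j‖) * ‖v j‖ ^ 2) / 2 := by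
        have hswap : ∑ j, (∑ i, ‖A i j‖) * ‖v j‖ ^ 2 = ∑ i, ∑ j, ‖A i j‖ * ‖v j‖ ^ 2 := by
          simp_rw [sum_mul]; exact sum_comm
        rw [hswap, ← sum_add_distrib, sum_div]
        refine sum_congr rfl fun i _ => ?_
        rw [sum_mul, ← sum_add_distrib, sum_div]
        exact sum_congr rfl fun j _ => by ring
    _ ≤ ((∑ i, r i * ‖v i‖ ^ 2) + ∑ j, r j * ‖v j‖ ^ 2) / 2 := by
        gcongr with i _ j _ <;> [exact hrow i; exact hcol j]
    _ = ∑ i, r i * ‖v i‖ ^ 2 := by ring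

theorem sum_norm_sq_pos {v : n → 𝕜} (hv : v ≠ 0) : 0 < ∑ i, ‖v i‖ ^ 2 := by
  obtain ⟨i, hi⟩ := Function.ne_iff.1 hv
  exact sum_pos' (fun j _ => by positivity) ⟨i, mem_univ i, pow_pos (norm_pos_iff.2 hi) 2⟩

theorem IsHermitian.im_eq_zero_of_mulVec_eq_smul {A : Matrix n n 𝕜} (hA : A.IsHermitian)
    {v : n → 𝕜} (hv : v ≠ 0) {z : 𝕜} (h : A *ᵥ v = z • v) : RCLike.im z = 0 := by
  have hform := hA.im_star_dotProduct_mulVec_self v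
  rw [h, dotProduct_smul, star_dotProduct_self_eq, smul_eq_mul, RCLike.im_mul_ofReal] at hform
  exact (mul_eq_zero.1 hform).resolve_right (sum_norm_sq_pos hv).ne'

theorem le_re_of_diagonal_add_mulVec_eq_smul [DecidableEq n] (D : n → ℝ) (A : Matrix n n 𝕜)
    {r : n → ℝ} (hrow : ∀ i, ∑ j, ‖A i j‖ ≤ r i) (hcol : ∀ j, ∑ i, ‖A i j‖ ≤ r j)
    {v : n → 𝕜} (hv : v ≠ 0) {z : 𝕜} (h : (diagonal (fun i => (D i : 𝕜)) + A) *ᵥ v = z • v)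
    {c : ℝ} (hc : ∀ i, v i ≠ 0 → c ≤ D i - r i) : c ≤ RCLike.re z := by
  have hform : RCLike.re z * ∑ i, ‖v i‖ ^ 2
      = ∑ i, D i * ‖v i‖ ^ 2 + RCLike.re (star v ⬝ᵥ A *ᵥ v) := by
    have := congrArg (fun w => RCLike.re (star v ⬝ᵥ w)) h
    rw [add_mulVec, dotProduct_add, star_dotProduct_diagonal_mulVec, dotProduct_smul,
      star_dotProduct_self_eq, smul_eq_mul, map_add, RCLike.re_mul_ofReal, map_sum] at this
    simpa only [← RCLike.ofReal_mul, RCLike.ofReal_re] using this.symm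
  have hA : -∑ i, r i * ‖v i‖ ^ 2 ≤ RCLike.re (star v ⬝ᵥ A *ᵥ v) :=
    neg_le_of_abs_le ((RCLike.abs_re_le_norm _).trans (norm_star_dotProduct_mulVec_le A v hrow hcol))
  have hpt : c * ∑ i, ‖v i‖ ^ 2 ≤ ∑ i, (D i - r i) * ‖v i‖ ^ 2 := by
    rw [mul_sum]
    refine sum_le_sum fun i _ => ?_
    by_cases hvi : v i = 0
    · simp [hvi]
    · exact mul_le_mul_of_nonneg_right (hc i hvi) (by positivity)
  simp only [sub_mul, sum_sub_distrib] at hpt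
  exact le_of_mul_le_mul_right (by linarith) (sum_norm_sq_pos hv)

end Matrix

namespace XXZ

open Matrix Finset

variable (Λ : Finset ℤ)

-- `⊥ : Cfg Λ` is the empty configuration, whose basis vector is `Ω_Λ = vac Λ`.
def occ (σ : Cfg Λ) (i : ℤ) : ℝ := if h : i ∈ Λ then (if σ ⟨i, h⟩ then 1 else 0) else 0

def bonds : Finset ℤ := Λ.filter (fun i => i + 1 ∈ Λ)

def clusterCount (σ : Cfg Λ) : ℝ :=
  ∑ i ∈ Λ, occ Λ σ i - ∑ i ∈ bonds Λ, occ Λ σ i * occ Λ σ (i + 1)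

def wallCount (σ : Cfg Λ) : ℝ :=
  ∑ i ∈ bonds Λ, if occ Λ σ i ≠ occ Λ σ (i + 1) then 1 else 0

def hopping (Δ : ℝ) : Mat Λ := (-(2 * Δ)⁻¹ : ℝ) • ∑ i ∈ bonds Λ, hopMat Λ i

def diagEnergy (lam : ℝ) (ω : ℤ → ℝ) (σ : Cfg Λ) : ℝ :=
  clusterCount Λ σ + lam * ∑ i ∈ Λ, ω i * occ Λ σ i

lemma occ_mem_zero_one (σ : Cfg Λ) (i : ℤ) : occ Λ σ i = 0 ∨ occ Λ σ i = 1 := by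
  unfold occ; split_ifs <;> simp

lemma occ_nonneg (σ : Cfg Λ) (i : ℤ) : 0 ≤ occ Λ σ i := by
  rcases occ_mem_zero_one Λ σ i with h | h <;> norm_num [h]

@[simp]
lemma occ_bot (i : ℤ) : occ Λ ⊥ i = 0 := by simp [occ]

lemma occ_ne_occ_iff {i : ℤ} (hi : i ∈ Λ) (hi1 : i + 1 ∈ Λ) (σ : Cfg Λ) :
    occ Λ σ i ≠ occ Λ σ (i + 1) ↔ σ ⟨i, hi⟩ ≠ σ ⟨i + 1, hi1⟩ := by
  simp only [occ, dif_pos hi, dif_pos hi1]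
  cases σ ⟨i, hi⟩ <;> cases σ ⟨i + 1, hi1⟩ <;> norm_num

lemma NMat_eq_diagonal (i : ℤ) : NMat Λ i = diagonal fun σ => (occ Λ σ i : ℂ) := by
  unfold NMat occ
  congr 1
  funext σ
  split_ifs <;> simp

lemma wallCount_le_two_mul_clusterCount (σ : Cfg Λ) : wallCount Λ σ ≤ 2 * clusterCount Λ σ := by
  have hwall : ∀ i ∈ bonds Λ, (if occ Λ σ i ≠ occ Λ σ (i + 1) then (1 : ℝ) else 0)
      = occ Λ σ i + occ Λ σ (i + 1) - 2 * (occ Λ σ i * occ Λ σ (i + 1)) := fun i _ => by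
    rcases occ_mem_zero_one Λ σ i with h | h <;>
      rcases occ_mem_zero_one Λ σ (i + 1) with h1 | h1 <;> norm_num [h, h1]
  have hleft : ∑ i ∈ bonds Λ, occ Λ σ i ≤ ∑ i ∈ Λ, occ Λ σ i :=
    sum_le_sum_of_subset_of_nonneg (filter_subset _ _) fun i _ _ => occ_nonneg Λ σ i
  have hright : ∑ i ∈ bonds Λ, occ Λ σ (i + 1) ≤ ∑ i ∈ Λ, occ Λ σ i := by
    rw [← sum_image (g := (· + 1)) fun _ _ _ _ h => add_right_cancel h]
    refine sum_le_sum_of_subset_of_nonneg ?_ fun i _ _ => occ_nonneg Λ σ i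
    intro j hj
    obtain ⟨i, hi, rfl⟩ := mem_image.1 hj
    exact (mem_filter.1 hi).2
  rw [wallCount, sum_congr rfl hwall, sum_sub_distrib, sum_add_distrib, ← mul_sum, clusterCount]
  linarith

/-- The leftmost occupied site is not the right end of an occupied bond, so occupied bonds are
strictly fewer than occupied sites. -/
lemma one_le_clusterCount {σ : Cfg Λ} (hσ : σ ≠ ⊥) : 1 ≤ clusterCount Λ σ := by
  set P := Λ.filter fun i => occ Λ σ i = 1
  set B := (bonds Λ).filter fun i => occ Λ σ i = 1 ∧ occ Λ σ (i + 1) = 1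
  have hP : P.Nonempty := by
    obtain ⟨j, hj⟩ := Function.ne_iff.1 hσ
    refine ⟨j, mem_filter.2 ⟨j.2, ?_⟩⟩
    simp_all [occ]
  have hsites : ∑ i ∈ Λ, occ Λ σ i = P.card := by
    rw [← sum_boole]
    exact sum_congr rfl fun i _ => by rcases occ_mem_zero_one Λ σ i with h | h <;> simp [h]
  have hbonds : ∑ i ∈ bonds Λ, occ Λ σ i * occ Λ σ (i + 1) = B.card := by
    rw [← sum_boole]
    refine sum_congr rfl fun i _ => ?_
    rcases occ_mem_zero_one Λ σ i with h | h <;>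
      rcases occ_mem_zero_one Λ σ (i + 1) with h1 | h1 <;> simp [h, h1]
  have hcard : B.card + 1 ≤ P.card := by
    have hsub : B.map (addRightEmbedding 1) ⊆ P.erase (P.min' hP) := by
      intro j hj
      obtain ⟨i, hi, rfl⟩ := mem_map.1 hj
      obtain ⟨hbond, hocc, hocc1⟩ := mem_filter.1 hi
      have hiP : i ∈ P := mem_filter.2 ⟨(mem_filter.1 hbond).1, hocc⟩
      have := P.min'_le i hiP
      exact mem_erase.2 ⟨by simp; omega, mem_filter.2 ⟨(mem_filter.1 hbond).2, hocc1⟩⟩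
    have := card_le_card hsub
    rw [card_map, card_erase_of_mem (P.min'_mem hP)] at this
    have := hP.card_pos
    omega
  rw [clusterCount, hsites, hbonds]
  have : (B.card : ℝ) + 1 ≤ P.card := by exact_mod_cast hcard
  linarith

lemma diagEnergy_bot (lam : ℝ) (ω : ℤ → ℝ) : diagEnergy Λ lam ω ⊥ = 0 := by
  simp [diagEnergy, clusterCount]

lemma one_sub_inv_le_diagEnergy_sub {Δ lam : ℝ} (hΔ : 1 < Δ) (hlam : 0 ≤ lam) {ω : ℤ → ℝ}
    (hω : ∀ i ∈ Λ, 0 ≤ ω i) {σ : Cfg Λ} (hσ : σ ≠ ⊥) :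
    1 - 1 / Δ ≤ diagEnergy Λ lam ω σ - (2 * Δ)⁻¹ * wallCount Λ σ := by
  have hdis : 0 ≤ lam * ∑ i ∈ Λ, ω i * occ Λ σ i :=
    mul_nonneg hlam (sum_nonneg fun i hi => mul_nonneg (hω i hi) (occ_nonneg Λ σ i))
  have hwall := wallCount_le_two_mul_clusterCount Λ σ
  have hcl := one_le_clusterCount Λ hσ
  have hinv : 0 < 1 / Δ ∧ 1 / Δ < 1 := ⟨by positivity, (div_lt_one (by linarith)).2 hΔ⟩
  rw [diagEnergy, mul_inv, inv_eq_one_div Δ]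
  nlinarith [mul_le_mul_of_nonneg_left hwall (by positivity : (0 : ℝ) ≤ 2⁻¹ * (1 / Δ)),
    mul_nonneg (sub_nonneg.2 hcl) (sub_nonneg.2 hinv.2.le)]

lemma swapCfg_involutive (i : ℤ) : Function.Involutive (swapCfg Λ i) := by
  intro σ
  funext j
  have hne : i + 1 ≠ i := by omega
  by_cases hj : (j : ℤ) = i
  · by_cases h1 : i + 1 ∈ Λ
    · have hi : i ∈ Λ := hj ▸ j.2
      have hji : (⟨i, hi⟩ : ↥Λ) = j := Subtype.ext hj.symm
      simp [swapCfg, hj, h1, hi, hne, hji]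
    · simp [swapCfg, hj, h1]
  · by_cases hj1 : (j : ℤ) = i + 1
    · have hi1 : i + 1 ∈ Λ := hj1 ▸ j.2
      have hji : (⟨i + 1, hi1⟩ : ↥Λ) = j := Subtype.ext hj1.symm
      by_cases h : i ∈ Λ
      · simp [swapCfg, hj1, h, hi1, hne, hji]
      · simp [swapCfg, hj1, h]
    · simp [swapCfg, hj, hj1]

lemma swapCfg_apply_left {i : ℤ} (hi : i ∈ Λ) (hi1 : i + 1 ∈ Λ) (τ : Cfg Λ) :
    swapCfg Λ i τ ⟨i, hi⟩ = τ ⟨i + 1, hi1⟩ := by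
  simp [swapCfg, hi1]

lemma swapCfg_apply_right {i : ℤ} (hi : i ∈ Λ) (hi1 : i + 1 ∈ Λ) (τ : Cfg Λ) :
    swapCfg Λ i τ ⟨i + 1, hi1⟩ = τ ⟨i, hi⟩ := by
  simp [swapCfg, hi]

lemma hopMat_cond_symm {i : ℤ} (hi : i ∈ Λ) (hi1 : i + 1 ∈ Λ) {σ τ : Cfg Λ}
    (h : τ ⟨i, hi⟩ ≠ τ ⟨i + 1, hi1⟩ ∧ σ = swapCfg Λ i τ) :
    σ ⟨i, hi⟩ ≠ σ ⟨i + 1, hi1⟩ ∧ τ = swapCfg Λ i σ := by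
  obtain ⟨hne, rfl⟩ := h
  rw [swapCfg_apply_left Λ hi hi1, swapCfg_apply_right Λ hi hi1, swapCfg_involutive]
  exact ⟨hne.symm, rfl⟩

lemma hopMat_comm (i : ℤ) (σ τ : Cfg Λ) : hopMat Λ i σ τ = hopMat Λ i τ σ := by
  by_cases hi : i ∈ Λ
  · by_cases hi1 : i + 1 ∈ Λ
    · simp only [hopMat, dif_pos hi, dif_pos hi1]
      exact if_congr ⟨hopMat_cond_symm Λ hi hi1, hopMat_cond_symm Λ hi hi1⟩ rfl rfl
    · simp [hopMat, hi, hi1]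
  · simp [hopMat, hi]

lemma hopMat_isHermitian (i : ℤ) : (hopMat Λ i).IsHermitian := by
  ext σ τ
  rw [conjTranspose_apply, hopMat_comm]
  unfold hopMat
  split_ifs <;> simp

lemma hopMat_apply_bot (i : ℤ) (σ : Cfg Λ) : hopMat Λ i σ ⊥ = 0 := by
  simp [hopMat]

lemma sum_norm_hopMat_apply {i : ℤ} (hi : i ∈ bonds Λ) (τ : Cfg Λ) :
    ∑ σ, ‖hopMat Λ i σ τ‖ = if occ Λ τ i ≠ occ Λ τ (i + 1) then 1 else 0 := by
  obtain ⟨hi, hi1⟩ := mem_filter.1 hi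
  simp only [hopMat, dif_pos hi, dif_pos hi1, occ_ne_occ_iff Λ hi hi1]
  by_cases h : τ ⟨i, hi⟩ ≠ τ ⟨i + 1, hi1⟩ <;> simp [h, apply_ite norm]

lemma sum_norm_sum_hopMat_apply_le (τ : Cfg Λ) :
    ∑ σ, ‖(∑ i ∈ bonds Λ, hopMat Λ i) σ τ‖ ≤ wallCount Λ τ := calc
  _ ≤ ∑ σ, ∑ i ∈ bonds Λ, ‖hopMat Λ i σ τ‖ :=
      sum_le_sum fun σ _ => by rw [Matrix.sum_apply]; exact norm_sum_le _ _
  _ = wallCount Λ τ := by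
      rw [sum_comm]
      exact sum_congr rfl fun i hi => sum_norm_hopMat_apply Λ hi τ

lemma HonMat_self_eq (Δ lam : ℝ) (ω : ℤ → ℝ) :
    HonMat Λ Δ lam ω Λ = diagonal (fun σ => (diagEnergy Λ lam ω σ : ℂ)) + hopping Λ Δ := by
  ext σ τ
  simp only [HonMat, hMat, hopping, NMat_eq_diagonal, bonds, Matrix.add_apply, Matrix.sum_apply,
    Matrix.sub_apply, Matrix.neg_apply, Matrix.smul_apply, diagonal_mul_diagonal, diagonal_apply,
    smul_eq_mul, Complex.real_smul]
  by_cases h : σ = τ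
  · subst h
    simp only [diagEnergy, clusterCount, bonds]
    push_cast
    simp only [sum_sub_distrib, sum_neg_distrib, neg_mul, ← mul_sum]
    ring
  · simp only [if_neg h]
    push_cast
    simp only [mul_zero, sum_const_zero, neg_mul, sum_sub_distrib, sum_neg_distrib,
      ← mul_sum]
    ring

lemma HonMat_isHermitian (Δ lam : ℝ) (ω : ℤ → ℝ) : (HonMat Λ Δ lam ω Λ).IsHermitian := by
  rw [HonMat_self_eq, hopping]
  refine (isHermitian_diagonal_of_self_adjoint _ ?_).add
    (IsHermitian.smul (isSelfAdjoint_sum _ fun i _ => hopMat_isHermitian Λ i) (.all _))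
  ext σ
  simp

lemma HonMat_apply_bot (Δ lam : ℝ) (ω : ℤ → ℝ) (σ : Cfg Λ) : HonMat Λ Δ lam ω Λ σ ⊥ = 0 := by
  rw [HonMat_self_eq, hopping]
  by_cases h : σ = ⊥ <;> simp [h, Matrix.sum_apply, hopMat_apply_bot, diagEnergy_bot]

lemma HonMat_mulVec_single_bot (Δ lam : ℝ) (ω : ℤ → ℝ) :
    HonMat Λ Δ lam ω Λ *ᵥ Pi.single ⊥ 1 = 0 := by
  funext σ
  simp [HonMat_apply_bot]

lemma HonMat_mulVec_apply_bot (Δ lam : ℝ) (ω : ℤ → ℝ) (v : Cfg Λ → ℂ) :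
    (HonMat Λ Δ lam ω Λ *ᵥ v) ⊥ = 0 := by
  refine sum_eq_zero fun τ _ => ?_
  change HonMat Λ Δ lam ω Λ ⊥ τ * v τ = 0
  rw [← (HonMat_isHermitian Λ Δ lam ω).apply, HonMat_apply_bot, star_zero, zero_mul]

lemma hopping_comm (Δ : ℝ) (σ τ : Cfg Λ) : hopping Λ Δ σ τ = hopping Λ Δ τ σ := by
  simp only [hopping, Matrix.smul_apply, Matrix.sum_apply, hopMat_comm Λ _ σ τ]

lemma sum_norm_hopping_apply_le {Δ : ℝ} (hΔ : 0 < Δ) (τ : Cfg Λ) :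
    ∑ σ, ‖hopping Λ Δ σ τ‖ ≤ (2 * Δ)⁻¹ * wallCount Λ τ := by
  simp only [hopping, Matrix.smul_apply, norm_smul, ← mul_sum, norm_neg, Real.norm_eq_abs,
    abs_of_pos (by positivity : 0 < (2 * Δ)⁻¹)]
  exact mul_le_mul_of_nonneg_left (sum_norm_sum_hopMat_apply_le Λ τ) (by positivity)

lemma one_sub_inv_le_re_of_mem_spectrum {Δ lam : ℝ} (hΔ : 1 < Δ) (hlam : 0 ≤ lam) {ω : ℤ → ℝ}
    (hω : ∀ i ∈ Λ, 0 ≤ ω i) {z : ℂ} (hz : z ∈ spectrum ℂ (HonMat Λ Δ lam ω Λ)) (hz0 : z ≠ 0) :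
    1 - 1 / Δ ≤ z.re ∧ z.im = 0 := by
  obtain ⟨v, hv, hvz⟩ := mem_spectrum_iff_exists_mulVec_eq_smul.1 hz
  refine ⟨?_, (HonMat_isHermitian Λ Δ lam ω).im_eq_zero_of_mulVec_eq_smul hv hvz⟩
  have hv_bot : v ⊥ = 0 := by
    have := congrFun hvz ⊥
    rw [HonMat_mulVec_apply_bot, Pi.smul_apply, smul_eq_mul, eq_comm, mul_eq_zero] at this
    exact this.resolve_left hz0
  have hΔ0 : 0 < Δ := by linarith
  rw [HonMat_self_eq] at hvz
  refine le_re_of_diagonal_add_mulVec_eq_smul _ _ (r := fun σ => (2 * Δ)⁻¹ * wallCount Λ σ)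
    (fun σ => (sum_congr rfl fun τ _ => by rw [hopping_comm]).trans_le
      (sum_norm_hopping_apply_le Λ hΔ0 σ))
    (sum_norm_hopping_apply_le Λ hΔ0) hv hvz
    fun σ hσ => one_sub_inv_le_diagEnergy_sub Λ hΔ hlam hω ?_
  rintro rfl
  exact hσ hv_bot

theorem spectrum_gap_general
    (Λ : Finset ℤ)
    (Δ lam : ℝ) (hΔ : 1 < Δ) (hlam : 0 < lam)
    (ω : ℤ → ℝ) (hω : ∀ i ∈ Λ, 0 ≤ ω i) :
    HOp Λ Δ lam ω (vac Λ) = 0 ∧ vac Λ ≠ 0 ∧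
    (0 : ℂ) ∈ spectrum ℂ (HOp Λ Δ lam ω) ∧
    spectrum ℂ (HOp Λ Δ lam ω)
      = {0} ∪ {z ∈ spectrum ℂ (HOp Λ Δ lam ω) | 1 - 1 / Δ ≤ z.re ∧ z.im = 0} := by
  have hspec : spectrum ℂ (HOp Λ Δ lam ω) = spectrum ℂ (HonMat Λ Δ lam ω Λ) :=
    AlgEquiv.spectrum_eq (Matrix.toEuclideanCLM (𝕜 := ℂ) (n := Cfg Λ)) _
  have hvac : HOp Λ Δ lam ω (vac Λ) = 0 := by
    change toEuclideanCLM (𝕜 := ℂ) (HonMat Λ Δ lam ω Λ) (WithLp.toLp 2 (Pi.single ⊥ 1)) = 0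
    rw [toEuclideanCLM_toLp, HonMat_mulVec_single_bot, WithLp.toLp_zero]
  have hzero : (0 : ℂ) ∈ spectrum ℂ (HOp Λ Δ lam ω) := by
    rw [hspec, mem_spectrum_iff_exists_mulVec_eq_smul]
    exact ⟨Pi.single ⊥ 1, by simp, by rw [HonMat_mulVec_single_bot, zero_smul]⟩
  refine ⟨hvac, by simp [vac], hzero, Set.ext fun z => ⟨fun hz => ?_, ?_⟩⟩
  · by_cases hz0 : z = 0
    · exact .inl hz0
    · exact .inr ⟨hz, one_sub_inv_le_re_of_mem_spectrum Λ hΔ hlam.le hω (hspec ▸ hz) hz0⟩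
  · rintro (rfl | hz)
    exacts [hzero, hz.1]

/-- the form of the spectrum of `H^Λ`: a zero eigenvalue with the
vacuum as eigenvector, and a gap `(0, 1-1/Δ)`. -/
theorem spectrum_gap
    (Λ : Finset ℤ) (hΛ : Λ.Nonempty) (hΛi : IsInterval Λ)
    (Δ lam : ℝ) (hΔ : 1 < Δ) (hlam : 0 < lam)
    (ω : ℤ → ℝ) (hω : ∀ i ∈ Λ, 0 ≤ ω i) :
    HOp Λ Δ lam ω (vac Λ) = 0 ∧ vac Λ ≠ 0 ∧
    (0 : ℂ) ∈ spectrum ℂ (HOp Λ Δ lam ω) ∧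
    spectrum ℂ (HOp Λ Δ lam ω)
      = {0} ∪ {z ∈ spectrum ℂ (HOp Λ Δ lam ω) | 1 - 1 / Δ ≤ z.re ∧ z.im = 0} :=
  spectrum_gap_general Λ Δ lam hΔ hlam ω hω

end XXZ
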